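/- Suppose the 8-tuple (A₁₁, A₁₂, A₂₁, A₂₂, x̄₁, x̄₂, x₁*, x₂*) satisfies the system (S) and additionally A₂₁ > 0 and A₂₂ < 0, and define the intervention operator M₂Ṽ₂(x) = sup_{y ≤ x} (Ṽ₂(y) − c − λ(x − y)). Then M₂Ṽ₂(x) < Ṽ₂(x) for every x < x̄₂, and M₂Ṽ₂(x) = Ṽ₂(x) for every x ≥ x̄₂. -/

import Mathlib

open Real Filter Set

/-- `φ₁(x) = A₁₁ e^{θx} + A₁₂ e^{−θx} + (x − s₁)/ρ`. -/
noncomputable def phi1 (ρ θ s1 A11 A12 : ℝ) : ℝ → ℝ :=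
  fun x => A11 * Real.exp (θ * x) + A12 * Real.exp (-(θ * x)) + (x - s1) / ρ

/-- `φ₂(x) = A₂₁ e^{θx} + A₂₂ e^{−θx} + (s₂ − x)/ρ`. -/
noncomputable def phi2 (ρ θ s2 A21 A22 : ℝ) : ℝ → ℝ :=
  fun x => A21 * Real.exp (θ * x) + A22 * Real.exp (-(θ * x)) + (s2 - x) / ρ

/-- The system (S): order conditions together with the ten equations, where
`θ = √(2ρ/σ²)`. -/
def SystemS (ρ σ lam lamt c ct s1 s2 A11 A12 A21 A22 xb1 xb2 xs1 xs2 : ℝ) : Prop :=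
  xb1 < xs1 ∧ xs1 < xb2 ∧ xb1 < xs2 ∧ xs2 < xb2 ∧
  deriv (phi1 ρ (Real.sqrt (2 * ρ / σ ^ 2)) s1 A11 A12) xs1 = lam ∧
  deriv (deriv (phi1 ρ (Real.sqrt (2 * ρ / σ ^ 2)) s1 A11 A12)) xs1 ≤ 0 ∧
  deriv (phi1 ρ (Real.sqrt (2 * ρ / σ ^ 2)) s1 A11 A12) xb1 = lam ∧
  phi1 ρ (Real.sqrt (2 * ρ / σ ^ 2)) s1 A11 A12 xb1
    = phi1 ρ (Real.sqrt (2 * ρ / σ ^ 2)) s1 A11 A12 xs1 - c - lam * (xs1 - xb1) ∧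
  phi1 ρ (Real.sqrt (2 * ρ / σ ^ 2)) s1 A11 A12 xb2
    = phi1 ρ (Real.sqrt (2 * ρ / σ ^ 2)) s1 A11 A12 xs2 + ct + lamt * (xb2 - xs2) ∧
  deriv (phi2 ρ (Real.sqrt (2 * ρ / σ ^ 2)) s2 A21 A22) xs2 = -lam ∧
  deriv (deriv (phi2 ρ (Real.sqrt (2 * ρ / σ ^ 2)) s2 A21 A22)) xs2 ≤ 0 ∧
  deriv (phi2 ρ (Real.sqrt (2 * ρ / σ ^ 2)) s2 A21 A22) xb2 = -lam ∧
  phi2 ρ (Real.sqrt (2 * ρ / σ ^ 2)) s2 A21 A22 xb1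
    = phi2 ρ (Real.sqrt (2 * ρ / σ ^ 2)) s2 A21 A22 xs1 + ct + lamt * (xs1 - xb1) ∧
  phi2 ρ (Real.sqrt (2 * ρ / σ ^ 2)) s2 A21 A22 xb2
    = phi2 ρ (Real.sqrt (2 * ρ / σ ^ 2)) s2 A21 A22 xs2 - c - lam * (xb2 - xs2)

/-- The candidate value function `Ṽ₂`, defined piecewise from `φ₂` with
`θ = √(2ρ/σ²)`. -/
noncomputable def V2t (ρ σ lam lamt c ct s2 A21 A22 xb1 xb2 xs1 xs2 : ℝ) : ℝ → ℝ :=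
  fun x =>
    if x ≤ xb1 then
      phi2 ρ (Real.sqrt (2 * ρ / σ ^ 2)) s2 A21 A22 xs1 + ct + lamt * (xs1 - x)
    else if x < xb2 then
      phi2 ρ (Real.sqrt (2 * ρ / σ ^ 2)) s2 A21 A22 x
    else
      phi2 ρ (Real.sqrt (2 * ρ / σ ^ 2)) s2 A21 A22 xs2 - c - lam * (x - xs2)

/-! Write `W(y) = Ṽ₂(y) + λy`, so that `M₂Ṽ₂(x) = sup_{y ≤ x} W(y) − c − λx`. Multiplied by
`e^{θy}`, the derivative of `g = φ₂ + λ·id` is a quadratic in `e^{θy}` with leading coefficient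
`A₂₁θ > 0`, vanishing at `x₂* < x̄₂`; so `g` increases up to `x₂*` and decreases on `[x₂*, x̄₂]`.
Left of `x̄₁`, `W` is affine with slope `λ − λ̃ ≥ 0` and meets `g` at `x̄₁`; right of `x̄₂` it is the
constant `W(x₂*) − c = g(x̄₂)`. So `W` is nondecreasing up to its maximum at `x₂*`: for `x ≤ x₂*` the
supremum is `W(x) − c − λx = Ṽ₂(x) − c`, and for `x > x₂*` it is `W(x₂*) − c − λx`, which is below
`Ṽ₂(x) = g(x) − λx` on `(x₂*, x̄₂)` and equal to it from `x̄₂` on. -/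

section ExpCombination

variable {α β γ θ p q : ℝ}

lemma exp_combination_mul_exp_eq (hpq : exp (θ * p) ≠ exp (θ * q))
    (hp : α * exp (θ * p) + β * exp (-(θ * p)) + γ = 0)
    (hq : α * exp (θ * q) + β * exp (-(θ * q)) + γ = 0) (y : ℝ) :
    (α * exp (θ * y) + β * exp (-(θ * y)) + γ) * exp (θ * y)
      = α * (exp (θ * y) - exp (θ * p)) * (exp (θ * y) - exp (θ * q)) := by
  have quadratic : ∀ t, (α * exp t + β * exp (-t) + γ) * exp t
      = α * exp t ^ 2 + γ * exp t + β := by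
    intro t
    rw [exp_neg]
    field_simp
    ring
  have hp' := quadratic (θ * p)
  have hq' := quadratic (θ * q)
  rw [hp, zero_mul] at hp'
  rw [hq, zero_mul] at hq'
  have hγ : γ = -α * (exp (θ * p) + exp (θ * q)) := by
    have h : (exp (θ * p) - exp (θ * q)) * (α * (exp (θ * p) + exp (θ * q)) + γ) = 0 := by
      linear_combination hq' - hp'
    linear_combination (mul_eq_zero.mp h).resolve_left (sub_ne_zero.mpr hpq)
  rw [quadratic]
  linear_combination (exp (θ * y) - exp (θ * p)) * hγ - hp'

lemma exp_combination_pos_of_lt (hα : 0 < α) (hθ : 0 < θ) (hpq : p < q)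
    (hp : α * exp (θ * p) + β * exp (-(θ * p)) + γ = 0)
    (hq : α * exp (θ * q) + β * exp (-(θ * q)) + γ = 0) {y : ℝ} (hy : y < p) :
    0 < α * exp (θ * y) + β * exp (-(θ * y)) + γ := by
  have hmono : exp (θ * y) < exp (θ * p) ∧ exp (θ * p) < exp (θ * q) :=
    ⟨exp_lt_exp.mpr (by gcongr), exp_lt_exp.mpr (by gcongr)⟩
  refine (mul_pos_iff_of_pos_right (exp_pos (θ * y))).mp ?_
  rw [exp_combination_mul_exp_eq hmono.2.ne hp hq]
  exact mul_pos_of_neg_of_neg (mul_neg_of_pos_of_neg hα (by linarith)) (by linarith)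

lemma exp_combination_neg_of_mem_Ioo (hα : 0 < α) (hθ : 0 < θ)
    (hp : α * exp (θ * p) + β * exp (-(θ * p)) + γ = 0)
    (hq : α * exp (θ * q) + β * exp (-(θ * q)) + γ = 0) {y : ℝ} (hy : y ∈ Ioo p q) :
    α * exp (θ * y) + β * exp (-(θ * y)) + γ < 0 := by
  have hmono : exp (θ * p) < exp (θ * y) ∧ exp (θ * y) < exp (θ * q) :=
    ⟨exp_lt_exp.mpr (by gcongr; exact hy.1), exp_lt_exp.mpr (by gcongr; exact hy.2)⟩
  refine neg_of_mul_neg_left ?_ (exp_pos (θ * y)).le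
  rw [exp_combination_mul_exp_eq (hmono.1.trans hmono.2).ne hp hq]
  exact mul_neg_of_pos_of_neg (mul_pos hα (by linarith)) (by linarith)

end ExpCombination

section Phi2

variable {ρ θ s2 A21 A22 lam p q : ℝ}

lemma hasDerivAt_phi2 (x : ℝ) :
    HasDerivAt (phi2 ρ θ s2 A21 A22)
      (A21 * θ * exp (θ * x) - A22 * θ * exp (-(θ * x)) - 1 / ρ) x := by
  have hlin : HasDerivAt (fun x : ℝ => θ * x) θ x := by
    simpa using (hasDerivAt_id x).const_mul θ
  have hdiv : HasDerivAt (fun x : ℝ => (s2 - x) / ρ) (-1 / ρ) x := by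
    simpa using ((hasDerivAt_const x s2).sub (hasDerivAt_id x)).div_const ρ
  exact (((hlin.exp.const_mul A21).add (hlin.neg.exp.const_mul A22)).add hdiv).congr_deriv
    (by simp only [Pi.neg_apply]; ring)

lemma hasDerivAt_phi2_add_mul (x : ℝ) :
    HasDerivAt (fun y => phi2 ρ θ s2 A21 A22 y + lam * y)
      (A21 * θ * exp (θ * x) + -(A22 * θ) * exp (-(θ * x)) + (lam - 1 / ρ)) x :=
  ((hasDerivAt_phi2 x).add ((hasDerivAt_id x).const_mul lam)).congr_deriv (by ring)

lemma deriv_phi2_add_mul_eq_zero {x : ℝ} (h : deriv (phi2 ρ θ s2 A21 A22) x = -lam) :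
    A21 * θ * exp (θ * x) + -(A22 * θ) * exp (-(θ * x)) + (lam - 1 / ρ) = 0 := by
  rw [(hasDerivAt_phi2 x).deriv] at h
  linear_combination h

lemma strictMonoOn_phi2_add_mul (hθ : 0 < θ) (hA21 : 0 < A21) (hpq : p < q)
    (hp : deriv (phi2 ρ θ s2 A21 A22) p = -lam) (hq : deriv (phi2 ρ θ s2 A21 A22) q = -lam) :
    StrictMonoOn (fun y => phi2 ρ θ s2 A21 A22 y + lam * y) (Iic p) := by
  refine strictMonoOn_of_deriv_pos (convex_Iic p)
    (fun y _ => (hasDerivAt_phi2_add_mul y).continuousAt.continuousWithinAt) fun y hy => ?_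
  rw [interior_Iic] at hy
  rw [(hasDerivAt_phi2_add_mul y).deriv]
  exact exp_combination_pos_of_lt (mul_pos hA21 hθ) hθ hpq (deriv_phi2_add_mul_eq_zero hp)
    (deriv_phi2_add_mul_eq_zero hq) hy

lemma strictAntiOn_phi2_add_mul (hθ : 0 < θ) (hA21 : 0 < A21)
    (hp : deriv (phi2 ρ θ s2 A21 A22) p = -lam) (hq : deriv (phi2 ρ θ s2 A21 A22) q = -lam) :
    StrictAntiOn (fun y => phi2 ρ θ s2 A21 A22 y + lam * y) (Icc p q) := by
  refine strictAntiOn_of_deriv_neg (convex_Icc p q)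
    (fun y _ => (hasDerivAt_phi2_add_mul y).continuousAt.continuousWithinAt) fun y hy => ?_
  rw [interior_Icc] at hy
  rw [(hasDerivAt_phi2_add_mul y).deriv]
  exact exp_combination_neg_of_mem_Ioo (mul_pos hA21 hθ) hθ (deriv_phi2_add_mul_eq_zero hp)
    (deriv_phi2_add_mul_eq_zero hq) hy

end Phi2

section V2t

variable {ρ σ lam lamt c ct s2 A21 A22 xb1 xb2 xs1 xs2 x : ℝ}

lemma V2t_of_le (hx : x ≤ xb1) :
    V2t ρ σ lam lamt c ct s2 A21 A22 xb1 xb2 xs1 xs2 x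
      = phi2 ρ (√(2 * ρ / σ ^ 2)) s2 A21 A22 xs1 + ct + lamt * (xs1 - x) :=
  if_pos hx

lemma V2t_of_mem_Ioo (hx : x ∈ Ioo xb1 xb2) :
    V2t ρ σ lam lamt c ct s2 A21 A22 xb1 xb2 xs1 xs2 x = phi2 ρ (√(2 * ρ / σ ^ 2)) s2 A21 A22 x := by
  simp only [V2t, if_neg (not_le.mpr hx.1), if_pos hx.2]

lemma V2t_of_ge (hxb : xb1 < xb2) (hx : xb2 ≤ x) :
    V2t ρ σ lam lamt c ct s2 A21 A22 xb1 xb2 xs1 xs2 x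
      = phi2 ρ (√(2 * ρ / σ ^ 2)) s2 A21 A22 xs2 - c - lam * (x - xs2) := by
  simp only [V2t, if_neg (not_le.mpr (hxb.trans_le hx)), if_neg (not_lt.mpr hx)]

end V2t

namespace SystemS

variable {ρ σ lam lamt c ct s1 s2 A11 A12 A21 A22 xb1 xb2 xs1 xs2 : ℝ}

local notation "θ" => √(2 * ρ / σ ^ 2)
local notation "Ṽ₂" => V2t ρ σ lam lamt c ct s2 A21 A22 xb1 xb2 xs1 xs2

lemma xb1_lt_xs2 (hS : SystemS ρ σ lam lamt c ct s1 s2 A11 A12 A21 A22 xb1 xb2 xs1 xs2) :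
    xb1 < xs2 :=
  hS.2.2.1

lemma xs2_lt_xb2 (hS : SystemS ρ σ lam lamt c ct s1 s2 A11 A12 A21 A22 xb1 xb2 xs1 xs2) :
    xs2 < xb2 :=
  hS.2.2.2.1

lemma strictMonoOn_phi2_add_mul
    (hS : SystemS ρ σ lam lamt c ct s1 s2 A11 A12 A21 A22 xb1 xb2 xs1 xs2)
    (hρ : 0 < ρ) (hσ : 0 < σ) (hA21 : 0 < A21) :
    StrictMonoOn (fun y => phi2 ρ θ s2 A21 A22 y + lam * y) (Iic xs2) := by
  obtain ⟨-, -, -, hxs2, -, -, -, -, -, hd, -, hd', -⟩ := hS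
  exact _root_.strictMonoOn_phi2_add_mul (sqrt_pos.mpr (by positivity)) hA21 hxs2 hd hd'

lemma strictAntiOn_phi2_add_mul
    (hS : SystemS ρ σ lam lamt c ct s1 s2 A11 A12 A21 A22 xb1 xb2 xs1 xs2)
    (hρ : 0 < ρ) (hσ : 0 < σ) (hA21 : 0 < A21) :
    StrictAntiOn (fun y => phi2 ρ θ s2 A21 A22 y + lam * y) (Icc xs2 xb2) := by
  obtain ⟨-, -, -, -, -, -, -, -, -, hd, -, hd', -⟩ := hS
  exact _root_.strictAntiOn_phi2_add_mul (sqrt_pos.mpr (by positivity)) hA21 hd hd'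

/-- By the value matching at `x̄₁`, `Ṽ₂ + λ·id` continues `φ₂ + λ·id` affinely left of `x̄₁`, with
slope `λ - λ̃`. -/
lemma V2t_add_mul_of_lt
    (hS : SystemS ρ σ lam lamt c ct s1 s2 A11 A12 A21 A22 xb1 xb2 xs1 xs2) {y : ℝ}
    (hy : y < xb2) :
    Ṽ₂ y + lam * y = phi2 ρ θ s2 A21 A22 (max y xb1) + lam * max y xb1
      + (lam - lamt) * (min y xb1 - xb1) := by
  obtain ⟨-, -, -, -, -, -, -, -, -, -, -, -, hmatch, -⟩ := hS
  rcases le_or_gt y xb1 with hy1 | hy1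
  · rw [V2t_of_le hy1, max_eq_right hy1, min_eq_left hy1, hmatch]
    ring
  · rw [V2t_of_mem_Ioo ⟨hy1, hy⟩, max_eq_left hy1.le, min_eq_right hy1.le]
    ring

lemma monotoneOn_V2t_add_mul
    (hS : SystemS ρ σ lam lamt c ct s1 s2 A11 A12 A21 A22 xb1 xb2 xs1 xs2)
    (hρ : 0 < ρ) (hσ : 0 < σ) (hA21 : 0 < A21) (hlam : lamt ≤ lam) :
    MonotoneOn (fun y => Ṽ₂ y + lam * y) (Iic xs2) := by
  intro y hy z hz hyz
  have hxb1 : xb1 < xs2 := hS.xb1_lt_xs2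
  have hxs2 : xs2 < xb2 := hS.xs2_lt_xb2
  simp only
  rw [hS.V2t_add_mul_of_lt ((mem_Iic.mp hy).trans_lt hxs2),
    hS.V2t_add_mul_of_lt ((mem_Iic.mp hz).trans_lt hxs2)]
  gcongr ?_ + (lam - lamt) * (?_ - xb1)
  · exact (hS.strictMonoOn_phi2_add_mul hρ hσ hA21).monotoneOn (max_le hy hxb1.le)
      (max_le hz hxb1.le) (max_le_max_right xb1 hyz)
  · exact min_le_min_right xb1 hyz

lemma V2t_add_mul_of_ge
    (hS : SystemS ρ σ lam lamt c ct s1 s2 A11 A12 A21 A22 xb1 xb2 xs1 xs2) {x : ℝ}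
    (hx : xb2 ≤ x) :
    Ṽ₂ x + lam * x = Ṽ₂ xs2 + lam * xs2 - c := by
  obtain ⟨-, -, hxb1, hxs2, -⟩ := hS
  rw [V2t_of_ge (hxb1.trans hxs2) hx, V2t_of_mem_Ioo ⟨hxb1, hxs2⟩]
  ring

lemma V2t_add_mul_sub_lt
    (hS : SystemS ρ σ lam lamt c ct s1 s2 A11 A12 A21 A22 xb1 xb2 xs1 xs2)
    (hρ : 0 < ρ) (hσ : 0 < σ) (hA21 : 0 < A21) {x : ℝ} (hx : x ∈ Ioo xs2 xb2) :
    Ṽ₂ xs2 + lam * xs2 - c < Ṽ₂ x + lam * x := by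
  have hxb1 : xb1 < xs2 := hS.xb1_lt_xs2
  have hxs2 : xs2 < xb2 := hS.xs2_lt_xb2
  have hanti := hS.strictAntiOn_phi2_add_mul hρ hσ hA21 ⟨hx.1.le, hx.2.le⟩ ⟨hxs2.le, le_rfl⟩ hx.2
  obtain ⟨-, -, -, -, -, -, -, -, -, -, -, -, -, hmatch⟩ := hS
  rw [V2t_of_mem_Ioo ⟨hxb1, hxs2⟩, V2t_of_mem_Ioo ⟨hxb1.trans hx.1, hx.2⟩]
  simp only at hanti
  linarith

lemma V2t_add_mul_le
    (hS : SystemS ρ σ lam lamt c ct s1 s2 A11 A12 A21 A22 xb1 xb2 xs1 xs2)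
    (hρ : 0 < ρ) (hσ : 0 < σ) (hA21 : 0 < A21) (hlam : lamt ≤ lam) (hc : 0 < c) (y : ℝ) :
    Ṽ₂ y + lam * y ≤ Ṽ₂ xs2 + lam * xs2 := by
  have hxb1 : xb1 < xs2 := hS.xb1_lt_xs2
  rcases le_or_gt y xs2 with hy | hy
  · exact hS.monotoneOn_V2t_add_mul hρ hσ hA21 hlam hy self_mem_Iic hy
  rcases lt_or_ge y xb2 with hy' | hy'
  · have hanti := hS.strictAntiOn_phi2_add_mul hρ hσ hA21
    rw [V2t_of_mem_Ioo ⟨hxb1.trans hy, hy'⟩, V2t_of_mem_Ioo ⟨hxb1, hS.xs2_lt_xb2⟩]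
    exact hanti.antitoneOn (left_mem_Icc.mpr hS.xs2_lt_xb2.le) ⟨hy.le, hy'.le⟩ hy.le
  · linarith [hS.V2t_add_mul_of_ge hy']

end SystemS

section Intervention

variable {V : ℝ → ℝ} {c lam x : ℝ}

lemma sSup_image_Iic_sub_le {B : ℝ} (h : ∀ y ≤ x, V y + lam * y ≤ B) :
    sSup ((fun y => V y - c - lam * (x - y)) '' Iic x) ≤ B - c - lam * x :=
  csSup_le (nonempty_Iic.image _) (forall_mem_image.mpr fun y hy => by linarith [h y hy])

lemma sSup_image_Iic_sub_eq {z : ℝ} (hz : z ≤ x) (h : ∀ y ≤ x, V y + lam * y ≤ V z + lam * z) :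
    sSup ((fun y => V y - c - lam * (x - y)) '' Iic x) = V z + lam * z - c - lam * x := by
  refine IsGreatest.csSup_eq ⟨⟨z, hz, by ring⟩, forall_mem_image.mpr fun y hy => ?_⟩
  linarith [h y hy]

end Intervention

theorem stmt_10_general (ρ σ lam lamt c ct s1 s2 : ℝ) (hρ : 0 < ρ) (hσ : 0 < σ)
    (h2 : lamt ≤ lam) (h6 : 0 < c)
    (A11 A12 A21 A22 xb1 xb2 xs1 xs2 : ℝ)
    (hS : SystemS ρ σ lam lamt c ct s1 s2 A11 A12 A21 A22 xb1 xb2 xs1 xs2)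
    (hA21 : 0 < A21)
    (M2V2 : ℝ → ℝ)
    (hM : ∀ x : ℝ, M2V2 x = sSup
      ((fun y => V2t ρ σ lam lamt c ct s2 A21 A22 xb1 xb2 xs1 xs2 y - c
        - lam * (x - y)) '' Set.Iic x)) :
    (∀ x : ℝ, x < xb2 →
      M2V2 x < V2t ρ σ lam lamt c ct s2 A21 A22 xb1 xb2 xs1 xs2 x) ∧
    (∀ x : ℝ, xb2 ≤ x →
      M2V2 x = V2t ρ σ lam lamt c ct s2 A21 A22 xb1 xb2 xs1 xs2 x) := by
  have hmax := hS.V2t_add_mul_le hρ hσ hA21 h2 h6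
  refine ⟨fun x hx => ?_, fun x hx => ?_⟩
  · rw [hM x]
    rcases le_or_gt x xs2 with hxs | hxs
    · have hmono := hS.monotoneOn_V2t_add_mul hρ hσ hA21 h2
      refine (sSup_image_Iic_sub_le fun y hy => hmono (hy.trans hxs) hxs hy).trans_lt ?_
      linarith
    · refine (sSup_image_Iic_sub_le fun y _ => hmax y).trans_lt ?_
      linarith [hS.V2t_add_mul_sub_lt hρ hσ hA21 ⟨hxs, hx⟩]
  · rw [hM x, sSup_image_Iic_sub_eq (hS.xs2_lt_xb2.le.trans hx) fun y _ => hmax y]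
    linarith [hS.V2t_add_mul_of_ge hx]

/-- The intervention operator `M₂Ṽ₂(x) = sup_{y ≤ x}(Ṽ₂(y) − c − λ(x − y))`
is strictly below `Ṽ₂` on `(−∞, x̄₂)` and equals `Ṽ₂` on `[x̄₂, ∞)`. -/
theorem stmt_10 (ρ σ lam lamt c ct s1 s2 : ℝ) (hρ : 0 < ρ) (hσ : 0 < σ)
    (h1 : 0 < 1 - lam * ρ) (h2 : lamt ≤ lam) (h3 : 0 ≤ lamt)
    (h4 : ct ≤ c) (h5 : 0 ≤ ct) (h6 : 0 < c)
    (h7 : (c, lam) ≠ (ct, lamt)) (h8 : s1 < s2)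
    (A11 A12 A21 A22 xb1 xb2 xs1 xs2 : ℝ)
    (hS : SystemS ρ σ lam lamt c ct s1 s2 A11 A12 A21 A22 xb1 xb2 xs1 xs2)
    (hA21 : 0 < A21) (hA22 : A22 < 0)
    (M2V2 : ℝ → ℝ)
    (hM : ∀ x : ℝ, M2V2 x = sSup
      ((fun y => V2t ρ σ lam lamt c ct s2 A21 A22 xb1 xb2 xs1 xs2 y - c
        - lam * (x - y)) '' Set.Iic x)) :
    (∀ x : ℝ, x < xb2 →
      M2V2 x < V2t ρ σ lam lamt c ct s2 A21 A22 xb1 xb2 xs1 xs2 x) ∧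
    (∀ x : ℝ, xb2 ≤ x →
      M2V2 x = V2t ρ σ lam lamt c ct s2 A21 A22 xb1 xb2 xs1 xs2 x) :=
  stmt_10_general ρ σ lam lamt c ct s1 s2 hρ hσ h2 h6 A11 A12 A21 A22 xb1 xb2 xs1 xs2 hS hA21 M2V2
    hM
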